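/- arXiv:2510.15020 — 2 statements merged into one kernel-verified Lean document; each statement's English description precedes it below -/
import Mathlib

section
/- For probability distributions P, Q on X and a bounded function f : X → [−B, B], |E_P[f] − E_Q[f]| ≤ 4·√(Var_Q[f]·H²(P,Q)) + 8B·H²(P,Q), where H²(P,Q) = (1/2)∫(√P − √Q)² is the squared Hellinger distance. -/
open scoped BigOperators Classical

/-- Squared Hellinger distance between pmfs on a finite space. -/
noncomputable def hellingerSq {X : Type*} [Fintype X] (P Q : X → ℝ) : ℝ :=
  (1 / 2) * ∑ x, (Real.sqrt (P x) - Real.sqrt (Q x)) ^ 2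

/-- Mean-difference bound via variance and Hellinger distance: for pmfs `P, Q` and
`f : X → [−B, B]`,
`|E_P f − E_Q f| ≤ 4 √(Var_Q[f]·H²(P,Q)) + 8 B H²(P,Q)`. -/
theorem mean_diff_le_var_hellinger {X : Type*} [Fintype X]
    (P Q : X → ℝ) (f : X → ℝ) (B : ℝ)
    (hP0 : ∀ x, 0 ≤ P x) (hP1 : ∑ x, P x = 1)
    (hQ0 : ∀ x, 0 ≤ Q x) (hQ1 : ∑ x, Q x = 1)
    (hf : ∀ x, |f x| ≤ B) :
    |(∑ x, P x * f x) - ∑ x, Q x * f x| ≤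
      4 * Real.sqrt ((∑ x, Q x * (f x - ∑ x', Q x' * f x') ^ 2) * hellingerSq P Q) +
        8 * B * hellingerSq P Q := by
  classical
  have hXne : Nonempty X := by
    by_contra hc
    rw [not_nonempty_iff] at hc
    simp [Finset.sum_eq_zero (fun x _ => (hc.false x).elim)] at hP1
  obtain ⟨x0⟩ := hXne
  have hB : 0 ≤ B := le_trans (abs_nonneg _) (hf x0)
  set μ : ℝ := ∑ x', Q x' * f x' with hμdef
  set g : X → ℝ := fun x => f x - μ with hg
  set sP : X → ℝ := fun x => Real.sqrt (P x) with hsP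
  set sQ : X → ℝ := fun x => Real.sqrt (Q x) with hsQ
  set V : ℝ := ∑ x, Q x * g x ^ 2 with hV
  set A : ℝ := ∑ x, (sP x - sQ x) ^ 2 with hA
  have hA0 : 0 ≤ A := Finset.sum_nonneg (fun x _ => sq_nonneg _)
  have hV0 : 0 ≤ V := Finset.sum_nonneg (fun x _ => mul_nonneg (hQ0 x) (sq_nonneg _))
  have hHA : hellingerSq P Q = A / 2 := by
    rw [hellingerSq, hA]; ring
  have hμB : |μ| ≤ B := by
    calc |μ| ≤ ∑ x', |Q x' * f x'| := Finset.abs_sum_le_sum_abs _ _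
      _ ≤ ∑ x', Q x' * B := Finset.sum_le_sum (fun x' _ => by
          rw [abs_mul, abs_of_nonneg (hQ0 x')]
          exact mul_le_mul_of_nonneg_left (hf x') (hQ0 x'))
      _ = B := by rw [← Finset.sum_mul, hQ1, one_mul]
  have hgB : ∀ x, |g x| ≤ 2 * B := by
    intro x
    calc |g x| ≤ |f x| + |μ| := abs_sub _ _
      _ ≤ B + B := add_le_add (hf x) hμB
      _ = 2 * B := by ring
  have key : (∑ x, P x * f x) - ∑ x, Q x * f x = ∑ x, (P x - Q x) * g x := by
    have : ∑ x, (P x - Q x) * g x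
        = (∑ x, P x * f x) - (∑ x, Q x * f x) - ((∑ x, P x) - ∑ x, Q x) * μ := by
      simp only [hg, sub_mul, mul_sub, Finset.sum_sub_distrib, Finset.sum_mul]
    rw [this, hP1, hQ1]; ring
  -- pointwise bound on |(P x - Q x) * g x|
  have hpt : ∀ x, |(P x - Q x) * g x|
      ≤ 2 * (|sP x - sQ x| * (sQ x * |g x|)) + (sP x - sQ x) ^ 2 * (2 * B) := by
    intro x
    have hsPn : 0 ≤ sP x := Real.sqrt_nonneg _
    have hsQn : 0 ≤ sQ x := Real.sqrt_nonneg _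
    have hP' : sP x ^ 2 = P x := Real.sq_sqrt (hP0 x)
    have hQ' : sQ x ^ 2 = Q x := Real.sq_sqrt (hQ0 x)
    have h1 : |P x - Q x| = |sP x - sQ x| * (sP x + sQ x) := by
      have h2 : P x - Q x = (sP x - sQ x) * (sP x + sQ x) := by nlinarith
      rw [h2, abs_mul, abs_of_nonneg (add_nonneg hsPn hsQn)]
    have h3 : sP x + sQ x ≤ 2 * sQ x + |sP x - sQ x| := by
      have := le_abs_self (sP x - sQ x); linarith
    have h4 : |(P x - Q x) * g x| = |sP x - sQ x| * (sP x + sQ x) * |g x| := by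
      rw [abs_mul, h1]
    rw [h4]
    have hgx0 : (0:ℝ) ≤ |g x| := abs_nonneg _
    have h5 : |sP x - sQ x| * (sP x + sQ x) * |g x|
        ≤ |sP x - sQ x| * (2 * sQ x + |sP x - sQ x|) * |g x| := by
      apply mul_le_mul_of_nonneg_right _ hgx0
      exact mul_le_mul_of_nonneg_left h3 (abs_nonneg _)
    have h6 : |sP x - sQ x| * (2 * sQ x + |sP x - sQ x|) * |g x|
        = 2 * (|sP x - sQ x| * (sQ x * |g x|)) + (sP x - sQ x) ^ 2 * |g x| := by
      rw [← sq_abs (sP x - sQ x)]; ring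
    have h7 : (sP x - sQ x) ^ 2 * |g x| ≤ (sP x - sQ x) ^ 2 * (2 * B) :=
      mul_le_mul_of_nonneg_left (hgB x) (sq_nonneg _)
    linarith
  -- Cauchy–Schwarz for the first term
  set T1 : ℝ := ∑ x, |sP x - sQ x| * (sQ x * |g x|) with hT1
  have hT1nn : 0 ≤ T1 := Finset.sum_nonneg (fun x _ =>
    mul_nonneg (abs_nonneg _) (mul_nonneg (Real.sqrt_nonneg _) (abs_nonneg _)))
  have hCS : T1 ^ 2 ≤ A * V := by
    have h := Finset.sum_mul_sq_le_sq_mul_sq Finset.univ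
      (fun x => |sP x - sQ x|) (fun x => sQ x * |g x|)
    have hA' : ∑ x, |sP x - sQ x| ^ 2 = A := by
      simp [hA, sq_abs]
    have hV' : ∑ x, (sQ x * |g x|) ^ 2 = V := by
      apply Finset.sum_congr rfl
      intro x _
      rw [mul_pow, sq_abs, Real.sq_sqrt (hQ0 x)]
    calc T1 ^ 2 ≤ (∑ x, |sP x - sQ x| ^ 2) * ∑ x, (sQ x * |g x|) ^ 2 := h
      _ = A * V := by rw [hA', hV']
  have hT1le : T1 ≤ Real.sqrt (A * V) := by
    have := Real.sqrt_le_sqrt hCS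
    rwa [Real.sqrt_sq hT1nn] at this
  -- assemble
  have hsum : |∑ x, (P x - Q x) * g x| ≤ 2 * T1 + 2 * B * A := by
    calc |∑ x, (P x - Q x) * g x| ≤ ∑ x, |(P x - Q x) * g x| :=
          Finset.abs_sum_le_sum_abs _ _
      _ ≤ ∑ x, (2 * (|sP x - sQ x| * (sQ x * |g x|)) + (sP x - sQ x) ^ 2 * (2 * B)) :=
          Finset.sum_le_sum (fun x _ => hpt x)
      _ = 2 * T1 + 2 * B * A := by
          rw [Finset.sum_add_distrib, ← Finset.mul_sum, ← Finset.sum_mul, hT1, hA]; ring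
  rw [key, hHA]
  have hAV : Real.sqrt (A * V) = Real.sqrt 2 * Real.sqrt (V * (A / 2)) := by
    rw [← Real.sqrt_mul (by norm_num : (0:ℝ) ≤ 2)]
    congr 1; ring
  have hs2 : Real.sqrt 2 ≤ 2 := by
    nlinarith [Real.sq_sqrt (by norm_num : (0:ℝ) ≤ 2), Real.sqrt_nonneg 2]
  have hsq : 0 ≤ Real.sqrt (V * (A / 2)) := Real.sqrt_nonneg _
  have h2T1 : 2 * T1 ≤ 4 * Real.sqrt (V * (A / 2)) := by
    calc 2 * T1 ≤ 2 * Real.sqrt (A * V) := by linarith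
      _ = 2 * Real.sqrt 2 * Real.sqrt (V * (A / 2)) := by rw [hAV]; ring
      _ ≤ 2 * 2 * Real.sqrt (V * (A / 2)) := by nlinarith
      _ = 4 * Real.sqrt (V * (A / 2)) := by ring
  have hBA : 2 * B * A ≤ 8 * B * (A / 2) := by nlinarith
  linarith
end

section
/- For probability distributions P, Q on X and a function h : X → [0, M], E_P[h] ≤ 3·E_Q[h] + 4M·H²(P,Q). Consequently for f : X → [−B,B] one has E_P[(f − E_Q f)²] ≤ 3·E_Q[(f − E_Q f)²] + 16B²·H²(P,Q). -/
open scoped BigOperators Classical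

lemma key_bound {X : Type*} [Fintype X] (P Q : X → ℝ) (h : X → ℝ) (M : ℝ)
    (hP0 : ∀ x, 0 ≤ P x) (hQ0 : ∀ x, 0 ≤ Q x)
    (hh0 : ∀ x, 0 ≤ h x) (hhM : ∀ x, h x ≤ M) :
    (∑ x, P x * h x) ≤ 3 * (∑ x, Q x * h x) + 4 * M * hellingerSq P Q := by
  have hQh : 0 ≤ ∑ x, Q x * h x :=
    Finset.sum_nonneg fun x _ => mul_nonneg (hQ0 x) (hh0 x)
  have point : ∀ x, P x * h x ≤
      2 * (Q x * h x) + 2 * M * (Real.sqrt (P x) - Real.sqrt (Q x)) ^ 2 := by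
    intro x
    have hp : Real.sqrt (P x) ^ 2 = P x := Real.sq_sqrt (hP0 x)
    have hq : Real.sqrt (Q x) ^ 2 = Q x := Real.sq_sqrt (hQ0 x)
    have h1 : P x ≤ 2 * Q x + 2 * (Real.sqrt (P x) - Real.sqrt (Q x)) ^ 2 := by
      nlinarith [sq_nonneg (Real.sqrt (P x) - 2 * Real.sqrt (Q x))]
    have h2 : (Real.sqrt (P x) - Real.sqrt (Q x)) ^ 2 * h x ≤
        (Real.sqrt (P x) - Real.sqrt (Q x)) ^ 2 * M :=
      mul_le_mul_of_nonneg_left (hhM x) (sq_nonneg _)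
    nlinarith [hh0 x, sq_nonneg (Real.sqrt (P x) - Real.sqrt (Q x))]
  calc ∑ x, P x * h x
      ≤ ∑ x, (2 * (Q x * h x) + 2 * M * (Real.sqrt (P x) - Real.sqrt (Q x)) ^ 2) :=
        Finset.sum_le_sum fun x _ => point x
    _ = 2 * (∑ x, Q x * h x) + 4 * M * hellingerSq P Q := by
        rw [Finset.sum_add_distrib, ← Finset.mul_sum, ← Finset.mul_sum, hellingerSq]; ring
    _ ≤ 3 * (∑ x, Q x * h x) + 4 * M * hellingerSq P Q := by linarith

/-- Change-of-measure bound: for `h : X → [0, M]`,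
`E_P[h] ≤ 3 E_Q[h] + 4 M H²(P,Q)`; consequently, for `f : X → [−B, B]`,
`E_P[(f − E_Q f)²] ≤ 3 E_Q[(f − E_Q f)²] + 16 B² H²(P,Q)`. -/
theorem exp_le_change_of_measure_hellinger {X : Type*} [Fintype X]
    (P Q : X → ℝ) (h : X → ℝ) (M : ℝ) (f : X → ℝ) (B : ℝ)
    (hP0 : ∀ x, 0 ≤ P x) (hP1 : ∑ x, P x = 1)
    (hQ0 : ∀ x, 0 ≤ Q x) (hQ1 : ∑ x, Q x = 1)
    (hh0 : ∀ x, 0 ≤ h x) (hhM : ∀ x, h x ≤ M)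
    (hf : ∀ x, |f x| ≤ B) :
    (∑ x, P x * h x) ≤ 3 * (∑ x, Q x * h x) + 4 * M * hellingerSq P Q ∧
      (∑ x, P x * (f x - ∑ x', Q x' * f x') ^ 2) ≤
        3 * (∑ x, Q x * (f x - ∑ x', Q x' * f x') ^ 2) +
          16 * B ^ 2 * hellingerSq P Q := by
  constructor
  · exact key_bound P Q h M hP0 hQ0 hh0 hhM
  · set μ := ∑ x', Q x' * f x' with hμ
    have hμB : |μ| ≤ B := by
      calc |μ| ≤ ∑ x, |Q x * f x| := Finset.abs_sum_le_sum_abs _ _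
        _ ≤ ∑ x, Q x * B := by
            refine Finset.sum_le_sum fun x _ => ?_
            rw [abs_mul, abs_of_nonneg (hQ0 x)]
            exact mul_le_mul_of_nonneg_left (hf x) (hQ0 x)
        _ = B := by rw [← Finset.sum_mul, hQ1, one_mul]
    have hbound : ∀ x, (f x - μ) ^ 2 ≤ 4 * B ^ 2 := by
      intro x
      have h1 : |f x - μ| ≤ 2 * B := by
        calc |f x - μ| ≤ |f x| + |μ| := abs_sub _ _
          _ ≤ 2 * B := by linarith [hf x]
      nlinarith [abs_nonneg (f x - μ), sq_abs (f x - μ)]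
    have := key_bound P Q (fun x => (f x - μ) ^ 2) (4 * B ^ 2)
      hP0 hQ0 (fun x => sq_nonneg _) hbound
    calc (∑ x, P x * (f x - μ) ^ 2)
        ≤ 3 * (∑ x, Q x * (f x - μ) ^ 2) + 4 * (4 * B ^ 2) * hellingerSq P Q := this
      _ = 3 * (∑ x, Q x * (f x - μ) ^ 2) + 16 * B ^ 2 * hellingerSq P Q := by ring
end
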